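/- The RAG operator T has a unique fixed point D^π in the space of bounded functions S × S → ℝ: there exists a bounded function D^π with T D^π = D^π, and any two bounded functions D, D' satisfying T D = D and T D' = D' are equal. -/

import Mathlib

/-!
`ragT` is an affine map `D ↦ c + γ • P D`, where `P` averages `D` against the product
probability weights `π(·|sᵢ) ⊗ π(·|sⱼ)`. Averaging does not increase the sup norm, so `ragT` is a
`γ`-contraction of the Banach space `ℓ^∞(S × S)` of bounded functions, and the bounded reward makes
`ragT 0 = c` bounded. Banach's fixed point theorem gives existence and uniqueness.
-/

/-- The RAG operator: `(T D)(s_i, s_j) = c(s_i, s_j) + γ · Σ_{a_i} Σ_{a_j}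
π(a_i|s_i)·π(a_j|s_j)·D(g(s_i,a_i), g(s_j,a_j))`, where
`c(s_i, s_j) = |Σ_a π(a|s_i)·r(s_i,a) − Σ_a π(a|s_j)·r(s_j,a)|`. -/
noncomputable def ragT {S A : Type*} [Fintype A] (γ : ℝ) (pol : S → A → ℝ)
    (r : S → A → ℝ) (g : S → A → S) (D : S × S → ℝ) : S × S → ℝ :=
  fun p =>
    |(∑ a, pol p.1 a * r p.1 a) - (∑ a, pol p.2 a * r p.2 a)| +
      γ * ∑ ai, ∑ aj, pol p.1 ai * pol p.2 aj * D (g p.1 ai, g p.2 aj)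

open Finset Set

open scoped ENNReal

lemma abs_sum_mul_le_of_abs_le {ι : Type*} [Fintype ι] {w f : ι → ℝ} {C : ℝ}
    (hw0 : ∀ i, 0 ≤ w i) (hw1 : ∑ i, w i = 1) (hf : ∀ i, |f i| ≤ C) :
    |∑ i, w i * f i| ≤ C :=
  calc |∑ i, w i * f i| ≤ ∑ i, |w i * f i| := abs_sum_le_sum_abs _ _
    _ ≤ ∑ i, w i * C := by
        gcongr with i
        rw [abs_mul, abs_of_nonneg (hw0 i)]
        exact mul_le_mul_of_nonneg_left (hf i) (hw0 i)
    _ = C := by rw [← sum_mul, hw1, one_mul]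

lemma abs_sum_sum_mul_le_of_abs_le {ι κ : Type*} [Fintype ι] [Fintype κ]
    {v : ι → ℝ} {w : κ → ℝ} {f : ι → κ → ℝ} {C : ℝ}
    (hv0 : ∀ i, 0 ≤ v i) (hv1 : ∑ i, v i = 1) (hw0 : ∀ j, 0 ≤ w j) (hw1 : ∑ j, w j = 1)
    (hf : ∀ i j, |f i j| ≤ C) :
    |∑ i, ∑ j, v i * w j * f i j| ≤ C := by
  simp_rw [mul_assoc, ← mul_sum]
  exact abs_sum_mul_le_of_abs_le hv0 hv1 fun i => abs_sum_mul_le_of_abs_le hw0 hw1 (hf i)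

section SupContraction

variable {X : Type*} {F : (X → ℝ) → X → ℝ} {γ : ℝ}

lemma bddAbove_abs_apply_of_sup_contraction (hF0 : BddAbove (range fun p => |F 0 p|))
    (hF : ∀ D D' C, (∀ q, |D q - D' q| ≤ C) → ∀ p, |F D p - F D' p| ≤ γ * C)
    {D : X → ℝ} (hD : BddAbove (range fun p => |D p|)) :
    BddAbove (range fun p => |F D p|) := by
  obtain ⟨M, hM⟩ := hF0
  obtain ⟨C, hC⟩ := hD
  refine ⟨M + γ * C, forall_mem_range.2 fun p => ?_⟩
  have hFD := hF D 0 C (fun q => by simpa using hC (mem_range_self q)) p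
  have hM := hM (mem_range_self p)
  have := abs_sub_abs_le_abs_sub (F D p) (F 0 p)
  linarith

theorem exists_unique_bdd_fixedPoint_of_sup_contraction (hγ0 : 0 ≤ γ) (hγ1 : γ < 1)
    (hF0 : BddAbove (range fun p => |F 0 p|))
    (hF : ∀ D D' C, (∀ q, |D q - D' q| ≤ C) → ∀ p, |F D p - F D' p| ≤ γ * C) :
    (∃ D : X → ℝ, BddAbove (range fun p => |D p|) ∧ F D = D) ∧
      ∀ D D' : X → ℝ, BddAbove (range fun p => |D p|) → BddAbove (range fun p => |D' p|) →
        F D = D → F D' = D' → D = D' := by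
  have memℓp_iff (D : X → ℝ) : Memℓp D ∞ ↔ BddAbove (range fun p => |D p|) := by
    simp only [memℓp_infty_iff, Real.norm_eq_abs]
  let G : lp (fun _ : X => ℝ) ∞ → lp (fun _ : X => ℝ) ∞ := fun D =>
    ⟨F D, (memℓp_iff _).2 <| bddAbove_abs_apply_of_sup_contraction hF0 hF <|
      (memℓp_iff _).1 D.2⟩
  have hG : ContractingWith ⟨γ, hγ0⟩ G := by
    refine ⟨by exact_mod_cast hγ1, LipschitzWith.of_dist_le_mul fun D D' => ?_⟩
    rw [dist_eq_norm, dist_eq_norm]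
    refine lp.norm_le_of_forall_le (mul_nonneg hγ0 (norm_nonneg _)) fun p => ?_
    refine hF D D' _ (fun q => ?_) p
    simpa using lp.norm_apply_le_norm ENNReal.top_ne_zero (D - D') q
  refine ⟨⟨_, (memℓp_iff _).1 (hG.fixedPoint G).2, congrArg Subtype.val hG.fixedPoint_isFixedPt⟩,
    fun D D' hD hD' hFD hFD' => ?_⟩
  have hfix := hG.fixedPoint_unique' (x := ⟨D, (memℓp_iff D).2 hD⟩)
    (y := ⟨D', (memℓp_iff D').2 hD'⟩) (Subtype.ext hFD) (Subtype.ext hFD')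
  exact congrArg Subtype.val hfix

end SupContraction

section RAG

variable {S A : Type*} [Fintype A] {γ : ℝ} {pol : S → A → ℝ} {r : S → A → ℝ} {g : S → A → S}

lemma ragT_sub_ragT (D D' : S × S → ℝ) (p : S × S) :
    ragT γ pol r g D p - ragT γ pol r g D' p =
      γ * ∑ ai, ∑ aj, pol p.1 ai * pol p.2 aj *
        (D (g p.1 ai, g p.2 aj) - D' (g p.1 ai, g p.2 aj)) := by
  simp only [ragT, mul_sub, sum_sub_distrib]
  ring

lemma abs_ragT_sub_ragT_le (hγ0 : 0 ≤ γ) (hpol0 : ∀ s a, 0 ≤ pol s a)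
    (hpol1 : ∀ s, ∑ a, pol s a = 1) (D D' : S × S → ℝ) (C : ℝ)
    (hC : ∀ q, |D q - D' q| ≤ C) (p : S × S) :
    |ragT γ pol r g D p - ragT γ pol r g D' p| ≤ γ * C := by
  rw [ragT_sub_ragT, abs_mul, abs_of_nonneg hγ0]
  exact mul_le_mul_of_nonneg_left
    (abs_sum_sum_mul_le_of_abs_le (hpol0 _) (hpol1 _) (hpol0 _) (hpol1 _) fun _ _ => hC _) hγ0

lemma bddAbove_abs_ragT_zero (hpol0 : ∀ s a, 0 ≤ pol s a) (hpol1 : ∀ s, ∑ a, pol s a = 1)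
    (hr : BddAbove (range fun q : S × A => |r q.1 q.2|)) :
    BddAbove (range fun p => |ragT γ pol r g 0 p|) := by
  obtain ⟨M, hM⟩ := hr
  have hrew (s : S) : |∑ a, pol s a * r s a| ≤ M :=
    abs_sum_mul_le_of_abs_le (hpol0 s) (hpol1 s) fun a => hM (mem_range_self (s, a))
  refine ⟨M + M, forall_mem_range.2 fun p => ?_⟩
  simpa [ragT] using (abs_sub _ _).trans (add_le_add (hrew p.1) (hrew p.2))

end RAG

theorem ragT_exists_unique_fixedPoint_general {S A : Type*} [Fintype A]
    (γ : ℝ) (hγ0 : 0 ≤ γ) (hγ1 : γ < 1)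
    (pol : S → A → ℝ) (hpol0 : ∀ s a, 0 ≤ pol s a) (hpol1 : ∀ s, ∑ a, pol s a = 1)
    (r : S → A → ℝ) (hr : BddAbove (Set.range fun q : S × A => |r q.1 q.2|))
    (g : S → A → S) :
    (∃ Dpi : S × S → ℝ, BddAbove (Set.range fun p : S × S => |Dpi p|) ∧
        ragT γ pol r g Dpi = Dpi) ∧
      ∀ D D' : S × S → ℝ,
        BddAbove (Set.range fun p : S × S => |D p|) →
        BddAbove (Set.range fun p : S × S => |D' p|) →
        ragT γ pol r g D = D → ragT γ pol r g D' = D' → D = D' :=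
  exists_unique_bdd_fixedPoint_of_sup_contraction hγ0 hγ1
    (bddAbove_abs_ragT_zero hpol0 hpol1 hr) (abs_ragT_sub_ragT_le hγ0 hpol0 hpol1)

/-- The RAG operator has a unique fixed point in the space of bounded functions
`S × S → ℝ`: a bounded fixed point exists, and any two bounded fixed points
are equal. -/
theorem ragT_exists_unique_fixedPoint {S A : Type*} [Nonempty S] [Fintype A] [Nonempty A]
    (γ : ℝ) (hγ0 : 0 ≤ γ) (hγ1 : γ < 1)
    (pol : S → A → ℝ) (hpol0 : ∀ s a, 0 ≤ pol s a) (hpol1 : ∀ s, ∑ a, pol s a = 1)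
    (r : S → A → ℝ) (hr : BddAbove (Set.range fun q : S × A => |r q.1 q.2|))
    (g : S → A → S) :
    (∃ Dpi : S × S → ℝ, BddAbove (Set.range fun p : S × S => |Dpi p|) ∧
        ragT γ pol r g Dpi = Dpi) ∧
      ∀ D D' : S × S → ℝ,
        BddAbove (Set.range fun p : S × S => |D p|) →
        BddAbove (Set.range fun p : S × S => |D' p|) →
        ragT γ pol r g D = D → ragT γ pol r g D' = D' → D = D' :=
  ragT_exists_unique_fixedPoint_general γ hγ0 hγ1 pol hpol0 hpol1 r hr g
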